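/- Let n, r ∈ ℕ, let P be a real symmetric positive semidefinite n×n matrix, let L be a real r×n matrix, and let R be a real symmetric positive definite r×r matrix. Then the updated covariance P⁺ = P − P·Lᵀ·(L·P·Lᵀ + R)^{-1}·L·P (i.e., (I − K·L)·P with Kalman gain K = P·Lᵀ·(L·P·Lᵀ + R)^{-1}) is symmetric positive semidefinite. -/

import Mathlib

/-!
The block matrix `[[L P Lᴴ + R, L P], [P Lᴴ, P]]` is the congruence of `diag(R, P)` by
`[[1, L], [0, 1]]`, hence positive semidefinite. Since `L P Lᴴ + R` is positive definite, the
Schur complement of that block, which is exactly `P - P Lᴴ (L P Lᴴ + R)⁻¹ L P`, is positive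
semidefinite.
-/

open Matrix

namespace Matrix

variable {m n R : Type*} [Fintype m] [Fintype n]
  [CommRing R] [PartialOrder R] [StarRing R] [StarOrderedRing R]

theorem PosSemidef.fromBlocks_zero {A : Matrix m m R} {D : Matrix n n R}
    (hA : A.PosSemidef) (hD : D.PosSemidef) : (fromBlocks A 0 0 D).PosSemidef := by
  rw [posSemidef_iff_dotProduct_mulVec]
  refine ⟨?_, fun x => ?_⟩
  · simp [IsHermitian, fromBlocks_conjTranspose, hA.isHermitian.eq, hD.isHermitian.eq]
  rw [← Sum.elim_comp_inl_inr x, fromBlocks_mulVec]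
  simp only [zero_mulVec, add_zero, zero_add, Sum.elim_comp_inl, Sum.elim_comp_inr,
    Function.star_sumElim, sumElim_dotProduct_sumElim]
  exact add_nonneg (hA.dotProduct_mulVec_nonneg _) (hD.dotProduct_mulVec_nonneg _)

variable [DecidableEq m] [DecidableEq n]

theorem PosSemidef.fromBlocks_add_mul_mul_conjTranspose {P : Matrix n n R} {Q : Matrix m m R}
    (hP : P.PosSemidef) (hQ : Q.PosSemidef) (L : Matrix m n R) :
    (fromBlocks (L * P * Lᴴ + Q) (L * P) (L * P)ᴴ P).PosSemidef := by
  have hcongr := (hQ.fromBlocks_zero hP).mul_mul_conjTranspose_same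
    (fromBlocks 1 L (0 : Matrix n m R) 1)
  convert hcongr using 1
  simp [fromBlocks_conjTranspose, fromBlocks_multiply, conjTranspose_mul, hP.isHermitian.eq,
    Matrix.mul_assoc, add_comm]

theorem PosSemidef.sub_mul_conjTranspose_mul_inv_mul_mul {K : Type*}
    [Field K] [PartialOrder K] [StarRing K] [StarOrderedRing K]
    {P : Matrix n n K} {Q : Matrix m m K} (hP : P.PosSemidef) (hQ : Q.PosDef)
    (L : Matrix m n K) :
    (P - P * Lᴴ * (L * P * Lᴴ + Q)⁻¹ * L * P).PosSemidef := by
  have hS : (L * P * Lᴴ + Q).PosDef := PosDef.posSemidef_add (hP.mul_mul_conjTranspose_same L) hQ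
  have := hS.isUnit.invertible
  have hSchur := (hS.fromBlocks₁₁ (L * P) P).mp
    (hP.fromBlocks_add_mul_mul_conjTranspose hQ.posSemidef L)
  simpa [conjTranspose_mul, hP.isHermitian.eq, Matrix.mul_assoc] using hSchur

end Matrix

/-- Let P be a real symmetric positive semidefinite n×n matrix,
L a real r×n matrix, and R a real symmetric positive definite r×r matrix.
Then the updated covariance P⁺ = P − P·Lᵀ·(L·P·Lᵀ + R)⁻¹·L·P (i.e. (I − K·L)·P
with Kalman gain K = P·Lᵀ·(L·P·Lᵀ + R)⁻¹) is symmetric positive semidefinite. -/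
theorem updated_covariance_posSemidef (n r : ℕ)
    (P : Matrix (Fin n) (Fin n) ℝ) (hP : P.PosSemidef)
    (L : Matrix (Fin r) (Fin n) ℝ)
    (R : Matrix (Fin r) (Fin r) ℝ) (hR : R.PosDef) :
    (P - P * Lᵀ * (L * P * Lᵀ + R)⁻¹ * L * P).PosSemidef := by
  simpa only [conjTranspose_eq_transpose_of_trivial] using
    hP.sub_mul_conjTranspose_mul_inv_mul_mul hR L
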